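/- The maps z ↦ w_{t,r}(rz)/r^{1+t}, restricted to the annulus 𝔸(1/r,1) = {1/r < |z| < 1}, converge uniformly as t → ∞ to the homeomorphism w : 𝔸(1/r,1) → 𝔻* given by: w(z) = z if √(1/r) ≤ |z| < 1; and for 1/r < |z| < √(1/r), arg w(z) = arg z and log|w(z)| = −½(1 + log(log r / (2 log(r|z|)))) log r. -/

import Mathlib

noncomputable section

open Set

/-- The radial profile of the pinching model for `x ≥ 0`. -/
def varrhoPos (r t x : ℝ) : ℝ := by
  classical exact
    if x ≤ Real.log r / (2 * Real.exp (2 * t)) then Real.exp (2 * t) * x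
    else if x < Real.log r / 2 then
      (Real.log (2 * x / Real.log r) + 1 + 2 * t) * Real.log r / 2
    else x + t * Real.log r

/-- The radial profile `ϱ_t`, extended as an odd function. -/
def varrho (r t x : ℝ) : ℝ := by
  classical exact if 0 ≤ x then varrhoPos r t x else - varrhoPos r t (-x)

/-- The pinching model homeomorphism `w_{t,r}`. -/
def pinch (r t : ℝ) (z : ℂ) : ℂ := by
  classical exact
    if z = 0 then 0
    else ((Real.exp (varrho r t (Real.log (‖z‖))) / ‖z‖ : ℝ) : ℂ) * z

/-- The limit map `w : 𝔸(1/r,1) → 𝔻*` of the rescaled pinching models. -/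
def wlim (r : ℝ) (z : ℂ) : ℂ := by
  classical exact
    if Real.sqrt (1 / r) ≤ ‖z‖ then z
    else ((Real.exp (-(1 + Real.log (Real.log r / (2 * Real.log (r * ‖z‖)))) *
      Real.log r / 2) / ‖z‖ : ℝ) : ℂ) * z

/-- The annulus `{a < |z| < b}`. -/
def ann (a b : ℝ) : Set ℂ := {z : ℂ | a < ‖z‖ ∧ ‖z‖ < b}

/-!
Both maps are radial: they fix arguments, so everything reduces to their moduli as functions
of `|z|`. In the coordinate `x = log (r|z|) ∈ (0, log r)`, the log-modulus of the rescaled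
pinching model is `ϱ_t(x) - (1 + t) log r`, which coincides with that of `w` as soon as
`x > log r / (2e^{2t})`; below this threshold both are at most `-(1/2 + t) log r`, so the moduli
differ by at most `r^{-(1/2 + t)}` uniformly. The log-modulus of `w` is a continuous increasing
bijection `(0, log r) → (-∞, 0)`, whence `w` maps the annulus continuously and bijectively
onto `𝔻*`.
-/

open Real Filter Topology

def radialMap (g : ℝ → ℝ) (z : ℂ) : ℂ := ((g ‖z‖ / ‖z‖ : ℝ) : ℂ) * z

section RadialMap

variable {g : ℝ → ℝ} {a b : ℝ}

lemma norm_radialMap (g : ℝ → ℝ) {z : ℂ} (hz : z ≠ 0) :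
    ‖radialMap g z‖ = |g ‖z‖| := by
  rw [radialMap, norm_mul, Complex.norm_real, Real.norm_eq_abs, abs_div, abs_norm,
    div_mul_cancel₀ _ (norm_ne_zero_iff.mpr hz)]

lemma radialMap_sub_radialMap (g h : ℝ → ℝ) (z : ℂ) :
    radialMap g z - radialMap h z = radialMap (g - h) z := by
  simp only [radialMap, Pi.sub_apply, sub_div, Complex.ofReal_sub, sub_mul]

lemma dist_radialMap (g h : ℝ → ℝ) {z : ℂ} (hz : z ≠ 0) :
    dist (radialMap g z) (radialMap h z) = dist (g ‖z‖) (h ‖z‖) := by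
  rw [dist_eq_norm, radialMap_sub_radialMap, norm_radialMap _ hz, Real.dist_eq, Pi.sub_apply]

lemma radialMap_ofReal_mul_div (g : ℝ → ℝ) {c : ℝ} (hc : 0 < c) (d : ℝ) (z : ℂ) :
    radialMap g (c * z) / d = radialMap (fun s => g (c * s) / d) z := by
  rcases eq_or_ne z 0 with rfl | hz
  · simp [radialMap]
  have hz' : ((‖z‖ : ℝ) : ℂ) ≠ 0 := by exact_mod_cast norm_ne_zero_iff.mpr hz
  have hc' : (c : ℂ) ≠ 0 := by exact_mod_cast hc.ne'
  rw [radialMap, radialMap, norm_mul, Complex.norm_real, Real.norm_eq_abs, abs_of_pos hc]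
  rcases eq_or_ne d 0 with rfl | hd
  · simp
  have hd' : (d : ℂ) ≠ 0 := by exact_mod_cast hd
  push_cast
  field_simp

lemma ne_zero_of_mem_ann {z : ℂ} (ha : 0 ≤ a) (hz : z ∈ ann a b) : z ≠ 0 :=
  norm_pos_iff.mp (ha.trans_lt hz.1)

lemma TendstoUniformlyOn.radialMap {ι : Type*} {l : Filter ι} {G : ι → ℝ → ℝ}
    (h : TendstoUniformlyOn G g l (Ioo a b)) (ha : 0 ≤ a) :
    TendstoUniformlyOn (fun i => radialMap (G i)) (radialMap g) l (ann a b) := by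
  rw [Metric.tendstoUniformlyOn_iff] at h ⊢
  intro ε hε
  filter_upwards [h ε hε] with i hi z hz
  rw [dist_radialMap _ _ (ne_zero_of_mem_ann ha hz)]
  exact hi _ hz

lemma ContinuousOn.radialMap (hg : ContinuousOn g (Ioo a b)) (ha : 0 ≤ a) :
    ContinuousOn (radialMap g) (ann a b) := by
  have hnorm : ContinuousOn (fun z : ℂ => ‖z‖) (ann a b) := continuous_norm.continuousOn
  refine (Complex.continuous_ofReal.comp_continuousOn ?_).mul continuousOn_id
  exact (hg.comp hnorm fun z hz => hz).div hnorm
    fun z hz => norm_ne_zero_iff.mpr (ne_zero_of_mem_ann ha hz)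

variable {c d : ℝ}

lemma injOn_radialMap (hg : BijOn g (Ioo a b) (Ioo c d)) (ha : 0 ≤ a) (hc : 0 ≤ c) :
    InjOn (radialMap g) (ann a b) := by
  intro z hz w hw h
  have hnorm : ‖z‖ = ‖w‖ := by
    have := congrArg norm h
    rw [norm_radialMap _ (ne_zero_of_mem_ann ha hz), norm_radialMap _ (ne_zero_of_mem_ann ha hw),
      abs_of_pos (hc.trans_lt (hg.mapsTo hz).1), abs_of_pos (hc.trans_lt (hg.mapsTo hw).1)] at this
    exact hg.injOn hz hw this
  have hscale : ((g ‖z‖ / ‖z‖ : ℝ) : ℂ) ≠ 0 := by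
    have := hc.trans_lt (hg.mapsTo hz).1
    have := ha.trans_lt hz.1
    exact_mod_cast (by positivity)
  rw [radialMap, radialMap, ← hnorm] at h
  exact mul_left_cancel₀ hscale h

lemma image_radialMap (hg : BijOn g (Ioo a b) (Ioo c d)) (ha : 0 ≤ a) (hc : 0 ≤ c) :
    radialMap g '' ann a b = ann c d := by
  ext w
  constructor
  · rintro ⟨z, hz, rfl⟩
    have hgz := hg.mapsTo hz
    show ‖radialMap g z‖ ∈ Ioo c d
    rwa [norm_radialMap _ (ne_zero_of_mem_ann ha hz), abs_of_pos (hc.trans_lt hgz.1)]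
  · intro hw
    obtain ⟨s, hs, hgs⟩ := hg.surjOn hw
    have hs0 : 0 < s := ha.trans_lt hs.1
    have hw0 : ‖w‖ ≠ 0 := norm_ne_zero_iff.mpr (ne_zero_of_mem_ann hc hw)
    have hz : ‖((s / ‖w‖ : ℝ) : ℂ) * w‖ = s := by
      rw [norm_mul, Complex.norm_real, Real.norm_eq_abs, abs_div, abs_norm, abs_of_pos hs0,
        div_mul_cancel₀ _ hw0]
    refine ⟨_, show _ ∈ Ioo a b from hz ▸ hs, ?_⟩
    have hs' : (s : ℂ) ≠ 0 := by exact_mod_cast hs0.ne'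
    have hw' : ((‖w‖ : ℝ) : ℂ) ≠ 0 := by exact_mod_cast hw0
    rw [radialMap, hz, hgs]
    push_cast
    field_simp

end RadialMap

/-- `log |w z|` written in the coordinate `x = log (r |z|)`. -/
def limitProfile (r x : ℝ) : ℝ :=
  if log r / 2 ≤ x then x - log r else (log (2 * x / log r) - 1) * log r / 2

section LimitProfile

variable {r : ℝ}

lemma limitProfile_lt_neg_half (hr : 1 < r) {x : ℝ} (hx : 0 < x) (hxr : x < log r / 2) :
    limitProfile r x < -(log r / 2) := by
  have hL := log_pos hr
  have hlog : log (2 * x / log r) < 0 :=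
    log_neg (by positivity) ((div_lt_one hL).mpr (by linarith))
  rw [limitProfile, if_neg hxr.not_ge]
  nlinarith

lemma strictMonoOn_limitProfile (hr : 1 < r) : StrictMonoOn (limitProfile r) (Ioi 0) := by
  have hL := log_pos hr
  intro x hx y hy hxy
  by_cases hy2 : log r / 2 ≤ y
  · have hHy : limitProfile r y = y - log r := if_pos hy2
    by_cases hx2 : log r / 2 ≤ x
    · rw [hHy, limitProfile, if_pos hx2]
      linarith
    · linarith [limitProfile_lt_neg_half hr hx (not_le.mp hx2)]
  · rw [limitProfile, limitProfile, if_neg hy2, if_neg (fun h => hy2 (h.trans hxy.le))]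
    have hlog : log (2 * x / log r) < log (2 * y / log r) :=
      log_lt_log (by have := mem_Ioi.mp hx; positivity) (by gcongr)
    nlinarith

lemma continuousOn_limitProfile (hr : 1 < r) : ContinuousOn (limitProfile r) (Ioi 0) := by
  have hL := log_pos hr
  refine ContinuousOn.if ?_ (by fun_prop) ?_
  · intro x ⟨_, hx⟩
    rw [show {x : ℝ | log r / 2 ≤ x} = Ici (log r / 2) from rfl, frontier_Ici] at hx
    rw [mem_singleton_iff.mp hx, mul_div_cancel₀ _ two_ne_zero, div_self hL.ne', log_one]
    ring
  · refine ContinuousOn.div_const (ContinuousOn.mul (ContinuousOn.sub ?_ continuousOn_const)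
      continuousOn_const) _
    exact ContinuousOn.log (by fun_prop) fun x hx => by
      have := mem_Ioi.mp hx.1
      positivity

lemma bijOn_limitProfile (hr : 1 < r) : BijOn (limitProfile r) (Ioo 0 (log r)) (Iio 0) := by
  have hL := log_pos hr
  refine ⟨fun x hx => ?_, (strictMonoOn_limitProfile hr).injOn.mono Ioo_subset_Ioi_self,
    fun c hc => ?_⟩
  · have : limitProfile r (log r) = 0 := by simp [limitProfile, hL.le]
    exact this ▸ strictMonoOn_limitProfile hr hx.1 hL hx.2
  · rcases le_or_gt (-(log r / 2)) c with hc2 | hc2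
    · refine ⟨c + log r, ⟨by linarith, by linarith [mem_Iio.mp hc]⟩, ?_⟩
      rw [limitProfile, if_pos (by linarith)]
      ring
    · have hexp : exp (2 * c / log r + 1) < 1 := by
        rw [exp_lt_one_iff, ← lt_neg_iff_add_neg, div_lt_iff₀ hL]
        linarith
      refine ⟨log r / 2 * exp (2 * c / log r + 1), ⟨by positivity, by nlinarith⟩, ?_⟩
      rw [limitProfile, if_neg (by nlinarith),
        show 2 * (log r / 2 * exp (2 * c / log r + 1)) / log r = exp (2 * c / log r + 1) by
          field_simp, log_exp]
      field_simp
      ring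

end LimitProfile

section PinchProfile

variable {r t x : ℝ}

lemma varrho_sub_eq_limitProfile (hr : 1 < r) (hx : log r / (2 * exp (2 * t)) < x) :
    varrho r t x - (1 + t) * log r = limitProfile r x := by
  have hx0 : 0 < x := lt_trans (by have := log_pos hr; positivity) hx
  rw [varrho, if_pos hx0.le, varrhoPos, if_neg hx.not_ge, limitProfile]
  split_ifs with h1 h2 h2
  · linarith
  · ring
  · ring
  · linarith

lemma varrho_sub_le (hx0 : 0 ≤ x) (hx : x ≤ log r / (2 * exp (2 * t))) :
    varrho r t x - (1 + t) * log r ≤ -(1 / 2 + t) * log r := by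
  rw [varrho, if_pos hx0, varrhoPos, if_pos hx]
  have : exp (2 * t) * x ≤ log r / 2 := by
    rw [le_div_iff₀ (by positivity)] at hx
    linarith
  linarith

lemma limitProfile_le (hr : 1 < r) (ht : 0 < t) (hx0 : 0 < x)
    (hx : x ≤ log r / (2 * exp (2 * t))) : limitProfile r x ≤ -(1 / 2 + t) * log r := by
  have hL := log_pos hr
  have h2t : 1 < exp (2 * t) := one_lt_exp_iff.mpr (by positivity)
  have hxr : x < log r / 2 := hx.trans_lt (div_lt_div_of_pos_left hL two_pos (by linarith))
  have hlog : log (2 * x / log r) ≤ -(2 * t) := by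
    rw [← log_exp (-(2 * t))]
    refine log_le_log (by positivity) ?_
    rw [div_le_iff₀ hL, exp_neg, ← div_eq_inv_mul, le_div_iff₀ (exp_pos _)]
    rw [le_div_iff₀ (by positivity)] at hx
    linarith
  rw [limitProfile, if_neg hxr.not_ge]
  nlinarith

lemma abs_exp_limitProfile_sub_le (hr : 1 < r) (ht : 0 < t) (hx : 0 < x) :
    |exp (limitProfile r x) - exp (varrho r t x) / r ^ (1 + t)| ≤
      exp (-(1 / 2 + t) * log r) := by
  rw [rpow_def_of_pos (one_pos.trans hr), ← exp_sub, mul_comm (log r)]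
  by_cases hx' : log r / (2 * exp (2 * t)) < x
  · rw [varrho_sub_eq_limitProfile hr hx', sub_self, abs_zero]
    positivity
  · replace hx' := not_lt.mp hx'
    exact abs_sub_le_of_nonneg_of_le (exp_pos _).le (exp_le_exp.mpr (limitProfile_le hr ht hx hx'))
      (exp_pos _).le (exp_le_exp.mpr (varrho_sub_le hx.le hx'))

lemma tendstoUniformlyOn_exp_varrho (hr : 1 < r) :
    TendstoUniformlyOn (fun t x => exp (varrho r t x) / r ^ (1 + t))
      (fun x => exp (limitProfile r x)) atTop (Ioi 0) := by
  have hbound : Tendsto (fun t => exp (-(1 / 2 + t) * log r)) atTop (𝓝 0) := by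
    refine tendsto_exp_atBot.comp ?_
    simpa only [neg_mul, Function.comp_def, id] using tendsto_neg_atTop_atBot.comp
      ((tendsto_atTop_add_const_left _ (1 / 2) tendsto_id).atTop_mul_const (log_pos hr))
  rw [Metric.tendstoUniformlyOn_iff]
  intro ε hε
  filter_upwards [hbound.eventually_lt_const hε, eventually_gt_atTop 0] with t hε' ht x hx
  exact (abs_exp_limitProfile_sub_le hr ht hx).trans_lt hε'

end PinchProfile

def limitModulus (r s : ℝ) : ℝ := exp (limitProfile r (log (r * s)))

def pinchModulus (r t s : ℝ) : ℝ := exp (varrho r t (log (r * s))) / r ^ (1 + t)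

section Moduli

variable {r : ℝ}

lemma bijOn_log_mul (hr : 1 < r) :
    BijOn (fun s => log (r * s)) (Ioo (1 / r) 1) (Ioo 0 (log r)) := by
  have hr0 : 0 < r := one_pos.trans hr
  have hmul : BijOn (r * ·) (Ioo (1 / r) 1) (Ioo 1 r) := by
    simpa [image_mul_left_Ioo hr0, hr0.ne'] using
      (mul_right_injective₀ hr0.ne').injOn.bijOn_image (s := Ioo (1 / r) 1)
  have hlog : BijOn log (Ioo 1 r) (Ioo 0 (log r)) := by
    simpa [image_log_Ioo one_pos hr.le] using
      (log_injOn_pos.mono fun s hs => one_pos.trans hs.1).bijOn_image (s := Ioo 1 r)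
  exact hlog.comp hmul

lemma bijOn_exp_Iio_zero : BijOn exp (Iio 0) (Ioo 0 1) := by
  simpa using exp_injective.injOn.bijOn_image (s := Iio (0 : ℝ))

lemma bijOn_limitModulus (hr : 1 < r) : BijOn (limitModulus r) (Ioo (1 / r) 1) (Ioo 0 1) :=
  bijOn_exp_Iio_zero.comp ((bijOn_limitProfile hr).comp (bijOn_log_mul hr))

lemma continuousOn_limitModulus (hr : 1 < r) : ContinuousOn (limitModulus r) (Ioo (1 / r) 1) := by
  have hr0 : 0 < r := one_pos.trans hr
  have hlog : ContinuousOn (fun s => log (r * s)) (Ioo (1 / r) 1) :=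
    ContinuousOn.log (by fun_prop) fun s hs => (mul_pos hr0 (lt_trans (by positivity) hs.1)).ne'
  exact continuous_exp.comp_continuousOn
    ((continuousOn_limitProfile hr).comp hlog fun s hs => ((bijOn_log_mul hr).mapsTo hs).1)

lemma tendstoUniformlyOn_pinchModulus (hr : 1 < r) :
    TendstoUniformlyOn (pinchModulus r) (limitModulus r) atTop (Ioo (1 / r) 1) :=
  ((tendstoUniformlyOn_exp_varrho hr).comp fun s => log (r * s)).mono
    fun _ hs => ((bijOn_log_mul hr).mapsTo hs).1

lemma pinch_eq_radialMap (r t : ℝ) : pinch r t = radialMap fun s => exp (varrho r t (log s)) := by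
  funext z
  rw [pinch, radialMap]
  split_ifs with hz
  · simp [hz]
  · rfl

lemma pinch_mul_div_rpow (hr : 0 < r) (t : ℝ) (z : ℂ) :
    pinch r t (r * z) / ((r ^ (1 + t) : ℝ) : ℂ) = radialMap (pinchModulus r t) z := by
  rw [pinch_eq_radialMap, radialMap_ofReal_mul_div _ hr]
  rfl

lemma wlim_eq_radialMap (hr : 0 < r) : wlim r = radialMap (limitModulus r) := by
  funext z
  rcases eq_or_ne z 0 with rfl | hz
  · simp [wlim, radialMap]
  have hs := norm_pos_iff.mpr hz
  have hlog : log (r * ‖z‖) = log r + log ‖z‖ := log_mul hr.ne' hs.ne'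
  have hsqrt : sqrt (1 / r) ≤ ‖z‖ ↔ log r / 2 ≤ log (r * ‖z‖) := by
    rw [← log_le_log_iff (by positivity) hs, log_sqrt (by positivity), one_div, log_inv, hlog]
    constructor <;> intro h <;> linarith
  rw [wlim, radialMap, limitModulus, limitProfile]
  by_cases h : log r / 2 ≤ log (r * ‖z‖)
  · rw [if_pos (hsqrt.mpr h), if_pos h, hlog, add_sub_cancel_left, exp_log hs, div_self hs.ne',
      Complex.ofReal_one, one_mul]
  · rw [if_neg (mt hsqrt.mp h), if_neg h, ← inv_div (2 * log (r * ‖z‖)), log_inv]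
    ring_nf

end Moduli

/-- The maps `z ↦ w_{t,r}(rz)/r^{1+t}`, restricted to `𝔸(1/r,1)`,
converge uniformly as `t → ∞` to the homeomorphism `w : 𝔸(1/r,1) → 𝔻*` given by the
explicit formula `wlim`. -/
theorem pinching_model_limit (r : ℝ) (hr : 1 < r) :
    TendstoUniformlyOn
      (fun (t : ℝ) (z : ℂ) => pinch r t ((r : ℂ) * z) / ((Real.rpow r (1 + t) : ℝ) : ℂ))
      (wlim r) Filter.atTop (ann (1 / r) 1) ∧
    ContinuousOn (wlim r) (ann (1 / r) 1) ∧
    Set.InjOn (wlim r) (ann (1 / r) 1) ∧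
    wlim r '' ann (1 / r) 1 = {z : ℂ | 0 < ‖z‖ ∧ ‖z‖ < 1} := by
  have hr0 : 0 < r := one_pos.trans hr
  simp only [Real.rpow_eq_pow, pinch_mul_div_rpow hr0, wlim_eq_radialMap hr0]
  exact ⟨(tendstoUniformlyOn_pinchModulus hr).radialMap (by positivity),
    (continuousOn_limitModulus hr).radialMap (by positivity),
    injOn_radialMap (bijOn_limitModulus hr) (by positivity) le_rfl,
    image_radialMap (bijOn_limitModulus hr) (by positivity) le_rfl⟩
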